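/- arXiv:2302.14690 — 6 statements merged into one kernel-verified Lean document; each statement's English description precedes it below -/
import Mathlib

section
/- Let 𝔻 ⊆ ℝ^{d_in} and let ℒ : 𝔻 × ℝ → [0,∞) satisfy: (i) for every y ∈ ℝ the map 𝔻 ∋ x ↦ ℒ(x,y) is continuous; (ii) for every x ∈ 𝔻 the map ℝ ∋ y ↦ ℒ(x,y) is strictly convex and attains its minimum. Then ℒ : 𝔻 × ℝ → [0,∞) is jointly continuous. -/
noncomputable section

open MeasureTheory Set Filter Topology ENNReal

abbrev Euc (din : ℕ) : Type := EuclideanSpace ℝ (Fin din)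

def dot {din : ℕ} (w x : Euc din) : ℝ := ∑ i, w i * x i

abbrev Params (din d : ℕ) : Type :=
  (Fin (d + 1) → Euc din) × (Fin d → ℝ) × (Fin (d + 1) → ℝ)

def response {din d : ℕ} (W : Params din d) (x : Euc din) : ℝ :=
  dot (W.1 0) x + W.2.2 0 +
    ∑ j : Fin d, W.2.1 j * max (dot (W.1 j.succ) x + W.2.2 j.succ) 0

def mSupport {din : ℕ} (μ : Measure (Euc din)) : Set (Euc din) :=
  {x | ∀ U : Set (Euc din), IsOpen U → x ∈ U → 0 < μ U}

def GenRespDimLE (din d : ℕ) (R : Euc din → ℝ) : Prop :=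
  ∃ (K : ℕ) (ν : Fin K → Euc din) (o : Fin K → ℝ) (m : Fin K → ℕ)
    (a : Euc din →ᵃ[ℝ] ℝ) (δ : Fin K → Euc din) (b : Fin K → ℝ),
    (∀ k, ν k ≠ 0) ∧
    (∀ k l : Fin K, k ≠ l →
      {x : Euc din | dot (ν k) x = o k} ≠ {x : Euc din | dot (ν l) x = o l}) ∧
    (∀ k, m k = 1 ∨ m k = 2) ∧
    (∑ k, m k) ≤ d ∧
    (∀ k, m k = 1 →
      {x : Euc din | dot (ν k) x = o k} ⊆ {x : Euc din | dot (δ k) x + b k = 0}) ∧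
    (∀ x, R x = a x + ∑ k, {y : Euc din | o k < dot (ν k) y}.indicator
        (fun y => dot (δ k) y + b k) x)

def IsGenResp (din : ℕ) (R : Euc din → ℝ) : Prop := ∃ d, GenRespDimLE din d R

def IsSimpleGenResp (din : ℕ) (R : Euc din → ℝ) : Prop :=
  IsGenResp din R ∧ Continuous R

def GenRespStrict (din d : ℕ) (R : Euc din → ℝ) : Prop :=
  GenRespDimLE din d R ∧ (GenRespDimLE din (d - 1) R ∨ ¬ Continuous R)

def regularPts {din : ℕ} (μ : Measure (Euc din)) (n : Euc din) (c : ℝ) : Set (Euc din) :=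
  {x | dot n x = c ∧
    (∀ U : Set (Euc din), IsOpen U → x ∈ U → 0 < μ (U ∩ {y | c < dot n y})) ∧
    (∀ U : Set (Euc din), IsOpen U → x ∈ U → 0 < μ (U ∩ {y | dot n y < c}))}

def NiceMeasure {din : ℕ} (μ : Measure (Euc din)) : Prop :=
  (∀ n : Euc din, n ≠ 0 → ∀ c : ℝ, μ {x | dot n x = c} = 0) ∧
  (∀ n : Euc din, n ≠ 0 → ∀ c : ℝ,
    0 < μ {x | c < dot n x} → 0 < μ {x | dot n x < c} →
    ¬ ∃ (m : ℕ) (ns : Fin m → Euc din) (cs : Fin m → ℝ),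
      (∀ i, ns i ≠ 0) ∧
      (∀ i, {x : Euc din | dot (ns i) x = cs i} ≠ {x : Euc din | dot n x = c}) ∧
      regularPts μ n c ⊆ ⋃ i, {x : Euc din | dot (ns i) x = cs i})

/-!
A convex function on `ℝ` is Lipschitz on `[y₀ - 1, y₀ + 1]` with a constant read off from its
values at `y₀` and `y₀ ± 1`, by monotonicity of slopes. For a family of convex functions `L x`
depending continuously on `x` pointwise, this constant therefore depends continuously on `x`,
which makes the family locally equi-Lipschitz in `y`; together with continuity in `x` this gives
joint continuity.
-/

theorem ConvexOn.abs_sub_le_of_abs_sub_le_one {f : ℝ → ℝ} (hf : ConvexOn ℝ univ f)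
    {y₀ u : ℝ} (hu : |u - y₀| ≤ 1) :
    |f u - f y₀| ≤ max (f (y₀ + 1) - f y₀) (f (y₀ - 1) - f y₀) * |u - y₀| := by
  rcases eq_or_ne u y₀ with rfl | hne
  · simp
  obtain ⟨hlo, hhi⟩ := abs_le.1 hu
  have hmono := hf.slope_mono (mem_univ y₀)
  have hup : slope f y₀ u ≤ f (y₀ + 1) - f y₀ := by
    simpa [slope_def_field] using
      hmono ⟨mem_univ u, hne⟩ ⟨mem_univ (y₀ + 1), by simp⟩ (by linarith)
  have hdown : f y₀ - f (y₀ - 1) ≤ slope f y₀ u := by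
    have := hmono ⟨mem_univ (y₀ - 1), by simp⟩ ⟨mem_univ u, hne⟩ (by linarith)
    rwa [slope_def_field, show y₀ - 1 - y₀ = -1 by ring, div_neg, div_one, neg_sub] at this
  calc |f u - f y₀| = |slope f y₀ u| * |u - y₀| := by
        rw [slope_def_field, abs_div, div_mul_cancel₀ _ (abs_ne_zero.2 (sub_ne_zero.2 hne))]
    _ ≤ max (f (y₀ + 1) - f y₀) (f (y₀ - 1) - f y₀) * |u - y₀| := by
        gcongr
        exact abs_le.2 ⟨by linarith [le_max_right (f (y₀ + 1) - f y₀) (f (y₀ - 1) - f y₀)],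
          hup.trans (le_max_left _ _)⟩

theorem continuousOn_prod_univ_of_continuousOn_of_convexOn {X : Type*} [TopologicalSpace X]
    {s : Set X} {f : X → ℝ → ℝ} (hcont : ∀ y, ContinuousOn (fun x => f x y) s)
    (hconv : ∀ x ∈ s, ConvexOn ℝ univ (f x)) :
    ContinuousOn (fun p : X × ℝ => f p.1 p.2) (s ×ˢ univ) := by
  rintro ⟨x₀, y₀⟩ ⟨hx₀, -⟩
  set l := 𝓝[s ×ˢ univ] (x₀, y₀)
  have hfst : Tendsto Prod.fst l (𝓝[s] x₀) :=
    continuous_fst.continuousWithinAt.tendsto_nhdsWithin fun q hq => hq.1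
  have hval (y : ℝ) : Tendsto (fun q : X × ℝ => f q.1 y) l (𝓝 (f x₀ y)) :=
    (hcont y x₀ hx₀).tendsto.comp hfst
  have hlip : Tendsto (fun q : X × ℝ => max (f q.1 (y₀ + 1) - f q.1 y₀)
      (f q.1 (y₀ - 1) - f q.1 y₀)) l (𝓝 (max (f x₀ (y₀ + 1) - f x₀ y₀)
      (f x₀ (y₀ - 1) - f x₀ y₀))) :=
    ((hval _).sub (hval _)).max ((hval _).sub (hval _))
  have hdist : Tendsto (fun q : X × ℝ => |q.2 - y₀|) l (𝓝 0) :=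
    ((continuous_snd.sub continuous_const).abs.tendsto' (x₀, y₀) 0 (by simp)).mono_left
      nhdsWithin_le_nhds
  have hnear : ∀ᶠ q : X × ℝ in l, q.1 ∈ s ∧ |q.2 - y₀| ≤ 1 :=
    (eventually_mem_nhdsWithin.and (hdist.eventually (ge_mem_nhds one_pos))).mono
      fun q hq => ⟨hq.1.1, hq.2⟩
  have hfiber : Tendsto (fun q : X × ℝ => f q.1 q.2 - f q.1 y₀) l (𝓝 0) := by
    refine squeeze_zero_norm' (hnear.mono fun q hq => ?_) (by simpa using hlip.mul hdist)
    exact (hconv q.1 hq.1).abs_sub_le_of_abs_sub_le_one hq.2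
  simpa [ContinuousWithinAt] using hfiber.add (hval y₀)

theorem loss_jointly_continuous_general
    (din : ℕ) (D : Set (Euc din))
    (L : Euc din → ℝ → ℝ)
    (hLx : ∀ y : ℝ, ContinuousOn (fun x => L x y) D)
    (hLy : ∀ x ∈ D, StrictConvexOn ℝ (Set.univ : Set ℝ) (fun y => L x y)) :
    ContinuousOn (fun p : Euc din × ℝ => L p.1 p.2) (D ×ˢ (Set.univ : Set ℝ)) :=
  continuousOn_prod_univ_of_continuousOn_of_convexOn hLx fun x hx => (hLy x hx).convexOn

/-- Lemma, part (I): joint continuity of the loss function. -/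
theorem loss_jointly_continuous
    (din : ℕ) (D : Set (Euc din))
    (L : Euc din → ℝ → ℝ)
    (hL0 : ∀ x ∈ D, ∀ y : ℝ, 0 ≤ L x y)
    (hLx : ∀ y : ℝ, ContinuousOn (fun x => L x y) D)
    (hLy : ∀ x ∈ D, StrictConvexOn ℝ (Set.univ : Set ℝ) (fun y => L x y))
    (hLmin : ∀ x ∈ D, ∃ y : ℝ, ∀ z : ℝ, L x y ≤ L x z) :
    ContinuousOn (fun p : Euc din × ℝ => L p.1 p.2) (D ×ˢ (Set.univ : Set ℝ)) :=
  loss_jointly_continuous_general din D L hLx hLy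
end
end

section
/- Let 𝔻 ⊆ ℝ^{d_in} and let ℒ : 𝔻 × ℝ → [0,∞) satisfy: (i) for every y ∈ ℝ the map 𝔻 ∋ x ↦ ℒ(x,y) is continuous; (ii) for every x ∈ 𝔻 the map ℝ ∋ y ↦ ℒ(x,y) is strictly convex and attains its minimum. Then for every compact K ⊆ ℝ the map 𝔻 ∋ x ↦ ℒ(x,·)|_K ∈ C(K,ℝ) is continuous with respect to the supremum norm on C(K,ℝ). -/
noncomputable section

open MeasureTheory Set Filter Topology ENNReal

/-!
Near `x₀`, the values of `ℒ(x, ·)` at `0` and `±(r + 1)` stay bounded, and by convexity these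
three values bound `|ℒ(x, ·)|` on `[-(r + 1), r + 1]`. A convex function bounded on an interval is
Lipschitz on any strictly smaller one, so the functions `ℒ(x, ·)` with `x` near `x₀` are
equi-Lipschitz on `K ⊆ (-r, r)`. For an equicontinuous family, pointwise convergence on a compact
set is uniform (Arzelà–Ascoli).
-/

open Metric NNReal

lemma tendstoUniformlyOn_of_eventually_lipschitzOnWith {ι α β : Type*} [PseudoMetricSpace α]
    [PseudoMetricSpace β] {F : ι → α → β} {f : α → β} {l : Filter ι} {K : Set α} {C : ℝ≥0}
    (hK : IsCompact K) (hF : ∀ᶠ i in l, LipschitzOnWith C (F i) K) (hf : LipschitzOnWith C f K)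
    (hlim : ∀ y ∈ K, Tendsto (F · y) l (𝓝 (f y))) :
    TendstoUniformlyOn F f l K := by
  classical
  -- Replacing the non-Lipschitz members by `f` gives an equicontinuous family, eventually
  -- equal to `F`.
  let G : ι → α → β := fun i => if LipschitzOnWith C (F i) K then F i else f
  have hFG : ∀ᶠ i in l, EqOn (G i) (F i) K := hF.mono fun i hi => by simp [G, hi, EqOn]
  refine TendstoUniformlyOn.congr ?_ hFG
  have hG : EquicontinuousOn G K := by
    refine (LipschitzOnWith.uniformEquicontinuousOn G C fun i => ?_).equicontinuousOn
    by_cases hi : LipschitzOnWith C (F i) K <;> simp [G, hi, hf]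
  have hGf := (EquicontinuousOn.tendsto_uniformOnFun_iff_pi' (𝔖 := {K}) (by simpa using hK)
    (by simpa using hG) l f).mpr ?_
  · exact (UniformOnFun.tendsto_iff_tendstoUniformlyOn.mp hGf) K rfl
  · rw [sUnion_singleton, tendsto_pi_nhds]
    rintro ⟨y, hy⟩
    exact (hlim y hy).congr' (hFG.mono fun i hi => (hi hy).symm)

def convexAbsBound (f : ℝ → ℝ) (r : ℝ) : ℝ := max (f (-r)) (f r) + 2 * |f 0|

lemma ConvexOn.abs_le_convexAbsBound {f : ℝ → ℝ} (hf : ConvexOn ℝ univ f) {r a : ℝ}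
    (ha : |a| ≤ r) : |f a| ≤ convexAbsBound f r := by
  have hmax : ∀ b, |b| ≤ r → f b ≤ max (f (-r)) (f r) := fun b hb =>
    hf.le_on_segment (mem_univ _) (mem_univ _)
      (by rw [segment_eq_Icc (by linarith [abs_nonneg b])]; exact abs_le.mp hb)
  have hmid : 2 * f 0 ≤ f a + f (-a) := by
    have := hf.2 (mem_univ a) (mem_univ (-a)) (by norm_num : (0 : ℝ) ≤ 1 / 2)
      (by norm_num : (0 : ℝ) ≤ 1 / 2) (by norm_num)
    norm_num at this
    linarith
  have hfa := hmax a ha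
  have hfna := hmax (-a) (by rwa [abs_neg])
  rw [convexAbsBound, abs_le]
  constructor <;> linarith [neg_abs_le (f 0), le_abs_self (f 0)]

lemma ConvexOn.lipschitzOnWith_of_convexAbsBound_le {f : ℝ → ℝ} (hf : ConvexOn ℝ univ f)
    {r M : ℝ} (hM : convexAbsBound f (r + 1) ≤ M) :
    LipschitzOnWith (2 * M).toNNReal f (ball 0 r) := by
  have := (hf.subset (subset_univ _) (convex_ball (0 : ℝ) (r + 1))).lipschitzOnWith_of_abs_le
    one_pos (M := M) fun a ha => (hf.abs_le_convexAbsBound ?_).trans hM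
  · simpa using this
  · rw [Real.dist_eq, sub_zero] at ha
    exact ha.le

theorem loss_continuous_into_CK_general
    (din : ℕ) (D : Set (Euc din))
    (L : Euc din → ℝ → ℝ)
    (hLx : ∀ y : ℝ, ContinuousOn (fun x => L x y) D)
    (hLy : ∀ x ∈ D, StrictConvexOn ℝ (Set.univ : Set ℝ) (fun y => L x y)) :
    ∀ K : Set ℝ, IsCompact K → ∀ x₀ ∈ D,
      TendstoUniformlyOn (fun x y => L x y) (fun y => L x₀ y) (nhdsWithin x₀ D) K := by
  intro K hK x₀ hx₀
  obtain ⟨r, hKr⟩ := hK.isBounded.subset_ball 0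
  have hlim : ∀ y, Tendsto (L · y) (𝓝[D] x₀) (𝓝 (L x₀ y)) := fun y => hLx y x₀ hx₀
  have hbound : Tendsto (fun x => convexAbsBound (L x) (r + 1)) (𝓝[D] x₀)
      (𝓝 (convexAbsBound (L x₀) (r + 1))) :=
    ((hlim _).max (hlim _)).add ((hlim 0).abs.const_mul 2)
  set M := convexAbsBound (L x₀) (r + 1) + 1
  have hlip : ∀ x ∈ D, convexAbsBound (L x) (r + 1) ≤ M →
      LipschitzOnWith (2 * M).toNNReal (L x) K := fun x hx hxM =>
    ((hLy x hx).convexOn.lipschitzOnWith_of_convexAbsBound_le hxM).mono hKr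
  refine tendstoUniformlyOn_of_eventually_lipschitzOnWith hK ?_
    (hlip x₀ hx₀ (le_add_of_nonneg_right zero_le_one)) fun y _ => hlim y
  filter_upwards [self_mem_nhdsWithin, hbound.eventually (eventually_le_nhds (lt_add_one _))]
    with x hx hxM
  exact hlip x hx hxM

/-- Lemma, part (II): for every compact `K ⊆ ℝ`, the map
`x ↦ ℒ(x,·)|_K ∈ C(K,ℝ)` is continuous with respect to the supremum norm; equivalently,
`ℒ(x,·) → ℒ(x₀,·)` uniformly on `K` as `x → x₀` within `D`. -/
theorem loss_continuous_into_CK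
    (din : ℕ) (D : Set (Euc din))
    (L : Euc din → ℝ → ℝ)
    (hL0 : ∀ x ∈ D, ∀ y : ℝ, 0 ≤ L x y)
    (hLx : ∀ y : ℝ, ContinuousOn (fun x => L x y) D)
    (hLy : ∀ x ∈ D, StrictConvexOn ℝ (Set.univ : Set ℝ) (fun y => L x y))
    (hLmin : ∀ x ∈ D, ∃ y : ℝ, ∀ z : ℝ, L x y ≤ L x z) :
    ∀ K : Set ℝ, IsCompact K → ∀ x₀ ∈ D,
      TendstoUniformlyOn (fun x y => L x y) (fun y => L x₀ y) (nhdsWithin x₀ D) K :=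
  loss_continuous_into_CK_general din D L hLx hLy
end
end

section
/- Let 𝔻 ⊆ ℝ^{d_in} and let ℒ : 𝔻 × ℝ → [0,∞) satisfy: (i) for every y ∈ ℝ the map 𝔻 ∋ x ↦ ℒ(x,y) is continuous; (ii) for every x ∈ 𝔻 the map ℝ ∋ y ↦ ℒ(x,y) is strictly convex and attains its minimum. Then there exists a unique function 𝔪 : 𝔻 → ℝ such that for every x ∈ 𝔻 one has ℒ(x, 𝔪(x)) = min_{y ∈ ℝ} ℒ(x,y); moreover, both 𝔪 : 𝔻 → ℝ and the map 𝔻 ∋ x ↦ min_{y ∈ ℝ} ℒ(x,y) ∈ ℝ are continuous. -/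
noncomputable section

open MeasureTheory Set Filter Topology ENNReal

/-!
A strictly convex function of one variable has at most one minimizer `p`, and `p` is a strict
minimizer: `f p < f a` and `f p < f b` for `a < p < b`. These two strict inequalities persist
for nearby `x` by continuity of `L · a`, `L · p`, `L · b`, and convexity then traps the
minimizer of `L x` in `(a, b)`; so `m` is continuous. For the minimal value, `L x p` bounds
`L x (m x)` from above, and comparing slopes bounds it from below by
`L x p - |m x - p| * C x`, where `C x` depends continuously on `x`; both bounds tend to the
minimal value at the base point.
-/

section Convex

variable {𝕜 E β : Type*} [Field 𝕜] [LinearOrder 𝕜] [IsStrictOrderedRing 𝕜]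

theorem StrictConvexOn.lt_of_isMinOn [AddCommMonoid E] [Module 𝕜 E] [AddCommMonoid β]
    [PartialOrder β] [IsOrderedAddMonoid β] [Module 𝕜 β] [PosSMulMono 𝕜 β]
    {s : Set E} {f : E → β} {q y : E} (hf : StrictConvexOn 𝕜 s f) (hq : IsMinOn f s q)
    (hqs : q ∈ s) (hys : y ∈ s) (hyq : y ≠ q) : f q < f y :=
  (hq hys).lt_of_ne fun h => hyq <|
    hf.eq_of_isMinOn (fun _ hz => h ▸ hq hz) hq hys hqs

variable {s : Set 𝕜} {f : 𝕜 → 𝕜}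

theorem ConvexOn.mem_Ioo_of_isMinOn (hf : ConvexOn 𝕜 s f) {a b p q : 𝕜}
    (hq : IsMinOn f s q) (hqs : q ∈ s) (hps : p ∈ s) (hap : a ≤ p) (hpb : p ≤ b)
    (hfa : f p < f a) (hfb : f p < f b) : q ∈ Ioo a b := by
  have hfq : f q ≤ f p := hq hps
  constructor
  · by_contra! hqa
    have := hf.le_on_segment hqs hps (by rw [segment_eq_Icc (hqa.trans hap)]; exact ⟨hqa, hap⟩)
    exact (max_le hfq le_rfl).not_gt (hfa.trans_le this)
  · by_contra! hbq
    have := hf.le_on_segment hps hqs (by rw [segment_eq_Icc (hpb.trans hbq)]; exact ⟨hpb, hbq⟩)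
    exact (max_le le_rfl hfq).not_gt (hfb.trans_le this)

theorem ConvexOn.sub_abs_mul_le (hf : ConvexOn 𝕜 univ f) (p y : 𝕜) :
    f p - |y - p| * max (f (p - 1) - f p) (f (p + 1) - f p) ≤ f y := by
  rcases lt_trichotomy y p with hyp | rfl | hpy
  · have hslope := hf.slope_mono_adjacent (mem_univ y) (mem_univ (p + 1)) hyp (lt_add_one p)
    rw [show p + 1 - p = 1 by ring, div_one, div_le_iff₀ (sub_pos.2 hyp)] at hslope
    rw [abs_of_neg (sub_neg.2 hyp)]
    nlinarith [le_max_right (f (p - 1) - f p) (f (p + 1) - f p)]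
  · simp
  · have hslope := hf.slope_mono_adjacent (mem_univ (p - 1)) (mem_univ y) (sub_one_lt p) hpy
    rw [show p - (p - 1) = 1 by ring, div_one, le_div_iff₀ (sub_pos.2 hpy)] at hslope
    rw [abs_of_pos (sub_pos.2 hpy)]
    nlinarith [le_max_left (f (p - 1) - f p) (f (p + 1) - f p)]

end Convex

section ParametricMinimizer

variable {X : Type*} [TopologicalSpace X] {D : Set X} {L : X → ℝ → ℝ} {m : X → ℝ}

theorem continuousOn_argmin_of_strictConvexOn
    (hLx : ∀ y, ContinuousOn (fun x => L x y) D)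
    (hLy : ∀ x ∈ D, StrictConvexOn ℝ univ (L x))
    (hm : ∀ x ∈ D, ∀ y, L x (m x) ≤ L x y) : ContinuousOn m D := by
  intro x hx
  refine (nhds_basis_Ioo (m x)).tendsto_right_iff.2 fun ⟨a, b⟩ ⟨ha, hb⟩ => ?_
  have hmin : ∀ x ∈ D, IsMinOn (L x) univ (m x) := fun x hx => isMinOn_univ_iff.2 (hm x hx)
  have hfa := (hLy x hx).lt_of_isMinOn (hmin x hx) trivial trivial ha.ne
  have hfb := (hLy x hx).lt_of_isMinOn (hmin x hx) trivial trivial hb.ne'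
  filter_upwards [(hLx (m x) x hx).eventually_lt (hLx a x hx) hfa,
    (hLx (m x) x hx).eventually_lt (hLx b x hx) hfb, self_mem_nhdsWithin] with x' hx'a hx'b hx'
  exact (hLy x' hx').convexOn.mem_Ioo_of_isMinOn (hmin x' hx') trivial trivial ha.le hb.le
    hx'a hx'b

theorem continuousOn_apply_argmin_of_convexOn
    (hLx : ∀ y, ContinuousOn (fun x => L x y) D)
    (hLy : ∀ x ∈ D, ConvexOn ℝ univ (L x))
    (hm : ∀ x ∈ D, ∀ y, L x (m x) ≤ L x y) (hmc : ContinuousOn m D) :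
    ContinuousOn (fun x => L x (m x)) D := by
  intro x hx
  set p := m x
  have hslope : ContinuousWithinAt
      (fun x' => max (L x' (p - 1) - L x' p) (L x' (p + 1) - L x' p)) D x :=
    ((hLx _ x hx).sub (hLx p x hx)).max ((hLx _ x hx).sub (hLx p x hx))
  have hdist : Tendsto (fun x' => |m x' - p|) (𝓝[D] x) (𝓝 0) := by
    rw [← abs_zero, ← sub_self p]
    exact ((hmc x hx).sub continuousWithinAt_const).abs
  have hlower := Tendsto.sub (hLx p x hx) (hdist.mul hslope)
  rw [zero_mul, sub_zero] at hlower
  refine tendsto_of_tendsto_of_tendsto_of_le_of_le' hlower (hLx p x hx) ?_ ?_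
  · filter_upwards [self_mem_nhdsWithin] with x' hx' using (hLy x' hx').sub_abs_mul_le p (m x')
  · filter_upwards [self_mem_nhdsWithin] with x' hx' using hm x' hx' p

end ParametricMinimizer

theorem pointwise_minimizer_exists_unique_continuous_general
    (din : ℕ) (D : Set (Euc din))
    (L : Euc din → ℝ → ℝ)
    (hLx : ∀ y : ℝ, ContinuousOn (fun x => L x y) D)
    (hLy : ∀ x ∈ D, StrictConvexOn ℝ (Set.univ : Set ℝ) (fun y => L x y))
    (hLmin : ∀ x ∈ D, ∃ y : ℝ, ∀ z : ℝ, L x y ≤ L x z) :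
    ∃ m : Euc din → ℝ,
      (∀ x ∈ D, ∀ y : ℝ, L x (m x) ≤ L x y) ∧
      (∀ m' : Euc din → ℝ, (∀ x ∈ D, ∀ y : ℝ, L x (m' x) ≤ L x y) →
        ∀ x ∈ D, m' x = m x) ∧
      ContinuousOn m D ∧
      ContinuousOn (fun x => L x (m x)) D := by
  choose! m hm using hLmin
  have hmc : ContinuousOn m D := continuousOn_argmin_of_strictConvexOn hLx hLy hm
  refine ⟨m, hm, fun m' hm' x hx => ?_, hmc,
    continuousOn_apply_argmin_of_convexOn hLx (fun x hx => (hLy x hx).convexOn) hm hmc⟩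
  exact (hLy x hx).eq_of_isMinOn (isMinOn_univ_iff.2 (hm' x hx)) (isMinOn_univ_iff.2 (hm x hx))
    trivial trivial

/-- Lemma, parts (III) and (IV): existence, uniqueness and continuity of
the pointwise minimizer `𝔪` and of the minimal value `x ↦ min_y ℒ(x,y)`. -/
theorem pointwise_minimizer_exists_unique_continuous
    (din : ℕ) (D : Set (Euc din))
    (L : Euc din → ℝ → ℝ)
    (hL0 : ∀ x ∈ D, ∀ y : ℝ, 0 ≤ L x y)
    (hLx : ∀ y : ℝ, ContinuousOn (fun x => L x y) D)
    (hLy : ∀ x ∈ D, StrictConvexOn ℝ (Set.univ : Set ℝ) (fun y => L x y))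
    (hLmin : ∀ x ∈ D, ∃ y : ℝ, ∀ z : ℝ, L x y ≤ L x z) :
    ∃ m : Euc din → ℝ,
      (∀ x ∈ D, ∀ y : ℝ, L x (m x) ≤ L x y) ∧
      (∀ m' : Euc din → ℝ, (∀ x ∈ D, ∀ y : ℝ, L x (m' x) ≤ L x y) →
        ∀ x ∈ D, m' x = m x) ∧
      ContinuousOn m D ∧
      ContinuousOn (fun x => L x (m x)) D :=
  pointwise_minimizer_exists_unique_continuous_general din D L hLx hLy hLmin
end
end

section
/- Let d ∈ ℕ₀, let ℛ : ℝ^{d_in} → ℝ be a function, and let φ : ℝ^{d_in} → ℝ^{d_in} be an injective affine map. Then: (i) ℛ ∈ 𝔯_d if and only if ℛ∘φ ∈ 𝔯_d; (ii) ℛ ∈ 𝔯_d^strict if and only if ℛ∘φ ∈ 𝔯_d^strict; (iii) ℛ is a simple generalized response if and only if ℛ∘φ is a simple generalized response. -/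
noncomputable section

open MeasureTheory Set Filter Topology ENNReal

/-! An injective affine self-map of `ℝ^din` is an affine equivalence, so it suffices to pull
a representation back along a surjective affine map `φ`: every affine functional
`y ↦ dot w y + c` becomes `x ↦ dot (φ.linear.adjoint w) x + (c + dot w (φ 0))`. The adjoint of
a surjective map is injective, so normals stay nonzero, and preimages under a surjection
separate sets, so the boundary hyperplanes stay pairwise distinct; multiplicities do not
change. -/

lemma dot_eq_inner {n : ℕ} (w x : Euc n) : dot w x = inner ℝ w x := by
  simp [dot, PiLp.inner_apply, mul_comm]

lemma LinearMap.adjoint_injective_of_surjective {m n : ℕ} {L : Euc m →ₗ[ℝ] Euc n}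
    (hL : Function.Surjective L) : Function.Injective L.adjoint := by
  rw [← LinearMap.ker_eq_bot, ← L.orthogonal_range, LinearMap.range_eq_top.mpr hL,
    Submodule.top_orthogonal_eq_bot]

section Pullback

variable {m n : ℕ} (φ : Euc m →ᵃ[ℝ] Euc n)

lemma dot_apply_affineMap (w : Euc n) (x : Euc m) :
    dot w (φ x) = dot (φ.linear.adjoint w) x + dot w (φ 0) := by
  rw [congrFun φ.decomp x, Pi.add_apply, dot_eq_inner, dot_eq_inner, dot_eq_inner, inner_add_right,
    LinearMap.adjoint_inner_left]

lemma preimage_hyperplane_affineMap (w : Euc n) (c : ℝ) :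
    φ ⁻¹' {y | dot w y = c} = {x | dot (φ.linear.adjoint w) x = c - dot w (φ 0)} := by
  ext x
  rw [mem_preimage, mem_ofPred_eq, mem_ofPred_eq, dot_apply_affineMap, eq_sub_iff_add_eq]

lemma preimage_halfspace_affineMap (w : Euc n) (c : ℝ) :
    φ ⁻¹' {y | c < dot w y} = {x | c - dot w (φ 0) < dot (φ.linear.adjoint w) x} := by
  ext x
  rw [mem_preimage, mem_ofPred_eq, mem_ofPred_eq, dot_apply_affineMap, sub_lt_iff_lt_add]

lemma preimage_zeroSet_affineMap (w : Euc n) (c : ℝ) :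
    φ ⁻¹' {y | dot w y + c = 0} = {x | dot (φ.linear.adjoint w) x + (c + dot w (φ 0)) = 0} := by
  ext x
  rw [mem_preimage, mem_ofPred_eq, mem_ofPred_eq, dot_apply_affineMap, add_right_comm, add_assoc]

theorem GenRespDimLE.comp_affineMap {d : ℕ} {R : Euc n → ℝ} (hR : GenRespDimLE n d R)
    (hφ : Function.Surjective φ) : GenRespDimLE m d (R ∘ φ) := by
  obtain ⟨K, ν, o, mult, a, δ, b, hν, hdistinct, hmult, hdim, hsimple, hrepr⟩ := hR
  have hA : Function.Injective φ.linear.adjoint := LinearMap.adjoint_injective_of_surjective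
    ((AffineMap.linear_surjective_iff φ).mpr hφ)
  refine ⟨K, fun k => φ.linear.adjoint (ν k), fun k => o k - dot (ν k) (φ 0), mult, a.comp φ,
    fun k => φ.linear.adjoint (δ k), fun k => b k + dot (δ k) (φ 0),
    fun k => (map_ne_zero_iff _ hA).mpr (hν k), fun k l hkl heq => ?_, hmult, hdim,
    fun k hk => ?_, fun x => ?_⟩
  · rw [← preimage_hyperplane_affineMap, ← preimage_hyperplane_affineMap] at heq
    exact hdistinct k l hkl (preimage_injective.mpr hφ heq)
  · simpa only [← preimage_hyperplane_affineMap, ← preimage_zeroSet_affineMap]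
      using preimage_mono (hsimple k hk)
  · rw [Function.comp_apply, hrepr, AffineMap.comp_apply]
    congr 1
    refine Finset.sum_congr rfl fun k _ => ?_
    rw [← indicator_comp_right, preimage_halfspace_affineMap]
    refine congrFun (indicator_congr fun y _ => ?_) x
    rw [Function.comp_apply, dot_apply_affineMap]
    ring

end Pullback

theorem genRespDimLE_comp_affineEquiv_iff {m n d : ℕ} {R : Euc n → ℝ} (e : Euc m ≃ᵃ[ℝ] Euc n) :
    GenRespDimLE m d (R ∘ e) ↔ GenRespDimLE n d R := by
  refine ⟨fun h => ?_, fun h => h.comp_affineMap e.toAffineMap e.surjective⟩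
  simpa [Function.comp_def] using h.comp_affineMap e.symm.toAffineMap e.symm.surjective

theorem continuous_comp_affineEquiv_iff {m n : ℕ} {R : Euc n → ℝ} (e : Euc m ≃ᵃ[ℝ] Euc n) :
    Continuous (R ∘ e) ↔ Continuous R := by
  refine ⟨fun h => ?_, fun h => h.comp e.toAffineMap.continuous_of_finiteDimensional⟩
  simpa [Function.comp_def] using h.comp e.symm.toAffineMap.continuous_of_finiteDimensional

/-- Lemma on affine transformations: the classes `𝔯_d`, `𝔯_d^strict` and
the simple generalized responses are invariant under composition with an injective affine
map. -/
theorem genresp_affine_invariance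
    (din : ℕ) (d : ℕ)
    (R : Euc din → ℝ)
    (φ : Euc din →ᵃ[ℝ] Euc din) (hφ : Function.Injective φ) :
    (GenRespDimLE din d R ↔ GenRespDimLE din d (R ∘ φ)) ∧
    (GenRespStrict din d R ↔ GenRespStrict din d (R ∘ φ)) ∧
    (IsSimpleGenResp din R ↔ IsSimpleGenResp din (R ∘ φ)) := by
  have hsurj : Function.Surjective φ := (AffineMap.linear_surjective_iff φ).mp
    (LinearMap.injective_iff_surjective.mp ((AffineMap.linear_injective_iff φ).mpr hφ))
  let e := AffineEquiv.ofBijective ⟨hφ, hsurj⟩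
  have hdim (d' : ℕ) : GenRespDimLE din d' R ↔ GenRespDimLE din d' (R ∘ φ) :=
    (genRespDimLE_comp_affineEquiv_iff e).symm
  have hcont : Continuous R ↔ Continuous (R ∘ φ) := (continuous_comp_affineEquiv_iff e).symm
  exact ⟨hdim d, and_congr (hdim d) (or_congr (hdim (d - 1)) hcont.not),
    and_congr (exists_congr hdim) hcont⟩
end
end

section
/- Let 𝔫 ∈ ℝ^{d_in} with |𝔫| = 1, δ ∈ ℝ^{d_in}, o, 𝔟 ∈ ℝ, set A = {x ∈ ℝ^{d_in} : 𝔫·x > o} and ℛ(x) = (δ·x + 𝔟) 1_A(x), and for n ∈ ℕ define ℛ_n(x) = (1/2)((δ + n𝔫)·x + 𝔟 − no)⁺ − (1/2)((−δ + n𝔫)·x − 𝔟 − no)⁺, where (·)⁺ = max(·,0). Then for every x ∈ ℝ^{d_in} with 𝔫·x ≠ o there exists N ∈ ℕ such that for all n ≥ N one has ℛ_n(x) = ℛ(x); in particular ℛ_n converges pointwise to ℛ on ℝ^{d_in} \ ∂A. -/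
noncomputable section

open MeasureTheory Set Filter Topology ENNReal

lemma dot_add_left {din : ℕ} (v w x : Euc din) : dot (v + w) x = dot v x + dot w x := by
  simp only [dot, PiLp.add_apply, add_mul, Finset.sum_add_distrib]

lemma dot_smul_left {din : ℕ} (c : ℝ) (w x : Euc din) : dot (c • w) x = c * dot w x := by
  simp only [dot, PiLp.smul_apply, smul_eq_mul, mul_assoc, Finset.mul_sum]

lemma dot_neg_left {din : ℕ} (w x : Euc din) : dot (-w) x = -dot w x := by
  simpa using dot_smul_left (-1) w x

lemma half_relu_sub_half_relu_of_abs_le {s a : ℝ} (h : |s| ≤ a) :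
    (1 / 2) * max (s + a) 0 - (1 / 2) * max (-s + a) 0 = s := by
  rw [abs_le'] at h
  rw [max_eq_left (by linarith), max_eq_left (by linarith)]
  ring

lemma half_relu_sub_half_relu_of_abs_le_neg {s a : ℝ} (h : |s| ≤ -a) :
    (1 / 2) * max (s + a) 0 - (1 / 2) * max (-s + a) 0 = 0 := by
  rw [abs_le'] at h
  rw [max_eq_right (by linarith), max_eq_right (by linarith)]
  ring

lemma eventually_abs_le_natCast_mul_abs {t : ℝ} (ht : t ≠ 0) (s : ℝ) :
    ∀ᶠ n : ℕ in atTop, |s| ≤ n * |t| :=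
  (tendsto_natCast_atTop_atTop.atTop_mul_const (abs_pos.mpr ht)).eventually_ge_atTop |s|

/-- Off the hyperplane, the two ReLU arguments are `±s + n t` with `t ≠ 0`, so for large `n`
both are positive (when `t > 0`) or both negative (when `t < 0`). -/
lemma eventually_two_relu_eq_indicator {din : ℕ} (𝔫 δ : Euc din) (o 𝔟 : ℝ) {x : Euc din}
    (hx : dot 𝔫 x ≠ o) :
    ∀ᶠ n : ℕ in atTop,
      (1 / 2) * max (dot (δ + (n : ℝ) • 𝔫) x + 𝔟 - (n : ℝ) * o) 0
        - (1 / 2) * max (dot (-δ + (n : ℝ) • 𝔫) x - 𝔟 - (n : ℝ) * o) 0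
      = {y : Euc din | o < dot 𝔫 y}.indicator (fun y => dot δ y + 𝔟) x := by
  set s := dot δ x + 𝔟
  set t := dot 𝔫 x - o
  filter_upwards [eventually_abs_le_natCast_mul_abs (sub_ne_zero.mpr hx) s] with n hn
  have harg₁ : dot (δ + (n : ℝ) • 𝔫) x + 𝔟 - n * o = s + n * t := by
    rw [dot_add_left, dot_smul_left]; ring
  have harg₂ : dot (-δ + (n : ℝ) • 𝔫) x - 𝔟 - n * o = -s + n * t := by
    rw [dot_add_left, dot_smul_left, dot_neg_left]; ring
  rw [harg₁, harg₂]
  rcases hx.lt_or_gt with hlt | hgt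
  · have ht : t < 0 := sub_neg.mpr hlt
    rw [abs_of_neg ht, mul_neg] at hn
    have hxA : x ∉ {y : Euc din | o < dot 𝔫 y} := not_lt.mpr hlt.le
    rw [half_relu_sub_half_relu_of_abs_le_neg hn, indicator_of_notMem hxA]
  · have ht : 0 < t := sub_pos.mpr hgt
    rw [abs_of_pos ht] at hn
    have hxA : x ∈ {y : Euc din | o < dot 𝔫 y} := hgt
    rw [half_relu_sub_half_relu_of_abs_le hn, indicator_of_mem hxA]

theorem asymptotic_representation_two_relu_general
    (din : ℕ)
    (𝔫 : Euc din) (δ : Euc din) (o 𝔟 : ℝ)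
    (R : Euc din → ℝ)
    (hR : ∀ x : Euc din,
      R x = {y : Euc din | o < dot 𝔫 y}.indicator (fun y => dot δ y + 𝔟) x)
    (Rn : ℕ → Euc din → ℝ)
    (hRn : ∀ (n : ℕ) (x : Euc din),
      Rn n x = (1 / 2) * max (dot (δ + (n : ℝ) • 𝔫) x + 𝔟 - (n : ℝ) * o) 0
        - (1 / 2) * max (dot (-δ + (n : ℝ) • 𝔫) x - 𝔟 - (n : ℝ) * o) 0) :
    (∀ x : Euc din, dot 𝔫 x ≠ o →
      ∃ N : ℕ, ∀ n ≥ N, Rn n x = R x) ∧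
    (∀ x : Euc din, dot 𝔫 x ≠ o →
      Tendsto (fun n => Rn n x) atTop (𝓝 (R x))) := by
  have hev : ∀ x, dot 𝔫 x ≠ o → ∀ᶠ n in atTop, Rn n x = R x := fun x hx => by
    simpa only [hRn, hR] using eventually_two_relu_eq_indicator 𝔫 δ o 𝔟 hx
  exact ⟨fun x hx => eventually_atTop.mp (hev x hx),
    fun x hx => tendsto_const_nhds.congr' (EventuallyEq.symm (hev x hx))⟩

/-- Remark: asymptotic ANN representations of generalized responses:
the discontinuous response `x ↦ (δ·x + 𝔟) 1_A(x)` is, off the boundary hyperplane `∂A`,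
the pointwise limit of the responses `ℛ_n` of two ReLU neurons. -/
theorem asymptotic_representation_two_relu
    (din : ℕ) (hdin : 0 < din)
    (𝔫 : Euc din) (h𝔫 : ‖𝔫‖ = 1) (δ : Euc din) (o 𝔟 : ℝ)
    (R : Euc din → ℝ)
    (hR : ∀ x : Euc din,
      R x = {y : Euc din | o < dot 𝔫 y}.indicator (fun y => dot δ y + 𝔟) x)
    (Rn : ℕ → Euc din → ℝ)
    (hRn : ∀ (n : ℕ) (x : Euc din),
      Rn n x = (1 / 2) * max (dot (δ + (n : ℝ) • 𝔫) x + 𝔟 - (n : ℝ) * o) 0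
        - (1 / 2) * max (dot (-δ + (n : ℝ) • 𝔫) x - 𝔟 - (n : ℝ) * o) 0) :
    (∀ x : Euc din, dot 𝔫 x ≠ o →
      ∃ N : ℕ, ∀ n ≥ N, Rn n x = R x) ∧
    (∀ x : Euc din, dot 𝔫 x ≠ o →
      Tendsto (fun n => Rn n x) atTop (𝓝 (R x))) :=
  asymptotic_representation_two_relu_general din 𝔫 δ o 𝔟 R hR Rn hRn
end
end

section
/- Let μ be a finite Borel measure on ℝ^{d_in} with compact support 𝔻 and let ℒ : 𝔻 × ℝ → [0,∞) be jointly continuous. Let d ∈ ℕ₀ and set err_d^ℒ = inf_{𝕎 ∈ 𝒲_d} ∫ ℒ(x, 𝔑^𝕎(x)) dμ(x). If there exists no 𝕎 ∈ 𝒲_d with ∫ ℒ(x, 𝔑^𝕎(x)) dμ(x) = err_d^ℒ, then every sequence (𝕎_n)_{n ∈ ℕ} ⊆ 𝒲_d with lim_{n→∞} ∫ ℒ(x, 𝔑^{𝕎_n}(x)) dμ(x) = err_d^ℒ satisfies lim_{n→∞} ‖𝕎_n‖ = ∞, where ‖·‖ denotes the Euclidean norm of the parameter vector. -/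
noncomputable section

open MeasureTheory Set Filter Topology ENNReal

/-! A minimizing sequence that does not diverge has a bounded, hence (Bolzano–Weierstrass) a
convergent, subsequence. Since μ lives on its support, where the loss is continuous, Fatou's lemma
makes the risk `𝕎 ↦ ∫ ℒ(x, 𝔑^𝕎(x)) dμ(x)` lower semicontinuous, so the limit of that
subsequence attains `err_d`, i.e. is a minimizer. -/

theorem lowerSemicontinuous_lintegral {α Θ : Type*} [MeasurableSpace α] {μ : Measure α}
    [TopologicalSpace Θ] [FirstCountableTopology Θ] {G : Θ → α → ℝ≥0∞}
    (hG_meas : ∀ θ, AEMeasurable (G θ) μ) (hG : ∀ᵐ x ∂μ, LowerSemicontinuous (G · x)) :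
    LowerSemicontinuous fun θ => ∫⁻ x, G θ x ∂μ := by
  refine lowerSemicontinuous_iff_le_liminf.2 fun θ => ?_
  calc ∫⁻ x, G θ x ∂μ ≤ ∫⁻ x, liminf (G · x) (𝓝 θ) ∂μ :=
        lintegral_mono_ae <| hG.mono fun x hx => hx.le_liminf θ
    _ ≤ liminf (fun θ' => ∫⁻ x, G θ' x ∂μ) (𝓝 θ) := lintegral_liminf_le' hG_meas

theorem lowerSemicontinuous_lintegral_ofReal_comp {X Θ : Type*} [TopologicalSpace X]
    [MeasurableSpace X] [OpensMeasurableSpace X] {μ : Measure X}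
    [TopologicalSpace Θ] [FirstCountableTopology Θ]
    {s : Set X} (hs : s ∈ ae μ) {L : X → ℝ → ℝ}
    (hL : ContinuousOn (fun p : X × ℝ => L p.1 p.2) (s ×ˢ univ))
    {g : Θ → X → ℝ} (hg : Continuous fun p : Θ × X => g p.1 p.2) :
    LowerSemicontinuous fun θ => ∫⁻ x, ENNReal.ofReal (L x (g θ x)) ∂μ := by
  refine lowerSemicontinuous_lintegral (fun θ => ?_) ?_
  · have hcont : ContinuousOn (fun x => L x (g θ x)) s :=
      hL.comp (continuous_id.prodMk (hg.comp (.prodMk_right θ))).continuousOn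
        fun x hx => ⟨hx, mem_univ _⟩
    rw [← Measure.restrict_eq_self_of_ae_mem hs]
    exact ENNReal.measurable_ofReal.comp_aemeasurable
      (hcont.aemeasurable₀ (NullMeasurableSet.of_null hs).of_compl)
  · filter_upwards [hs] with x hx
    refine (ENNReal.continuous_ofReal.comp ?_).lowerSemicontinuous
    exact hL.comp_continuous (continuous_const.prodMk (hg.comp (.prodMk_left x)))
      fun _ => ⟨hx, mem_univ _⟩

theorem LowerSemicontinuous.tendsto_norm_atTop_of_tendsto_iInf {E γ : Type*}
    [NormedAddCommGroup E] [ProperSpace E]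
    [CompleteLinearOrder γ] [TopologicalSpace γ] [OrderTopology γ] {f : E → γ}
    (hf : LowerSemicontinuous f) (hf_min : ∀ θ, f θ ≠ ⨅ θ', f θ') {u : ℕ → E}
    (hu : Tendsto (f ∘ u) atTop (𝓝 (⨅ θ, f θ))) : Tendsto (‖u ·‖) atTop atTop := by
  by_contra h_div
  obtain ⟨b, hb⟩ : ∃ b, ∃ᶠ n in atTop, u n ∈ Metric.ball 0 b := by
    simpa [tendsto_atTop, Filter.not_eventually, frequently_atTop] using h_div
  obtain ⟨θ, -, φ, hφ, hθ⟩ :=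
    tendsto_subseq_of_frequently_bounded Metric.isBounded_ball hb
  refine hf_min θ (le_antisymm ?_ (iInf_le f θ))
  calc f θ ≤ liminf f (𝓝 θ) := hf.le_liminf θ
    _ ≤ liminf (f ∘ u ∘ φ) atTop := hθ.liminf_le_liminf_comp
    _ = ⨅ θ, f θ := (hu.comp hφ.tendsto_atTop).liminf_eq

theorem mSupport_eq_support {din : ℕ} (μ : Measure (Euc din)) : mSupport μ = μ.support := by
  ext x
  simp only [mSupport, Measure.support_eq_forall_isOpen, mem_ofPred_eq]
  exact ⟨fun h U hxU hU => h U hU hxU, fun h U hU hxU => h U hxU hU⟩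

theorem continuous_response {din d : ℕ} :
    Continuous fun p : Params din d × Euc din => response p.1 p.2 := by
  unfold response dot
  fun_prop

theorem minimizing_sequence_diverges_general
    (din : ℕ) (d : ℕ)
    (μ : Measure (Euc din))
    (D : Set (Euc din)) (hD : D = mSupport μ)
    (L : Euc din → ℝ → ℝ)
    (hLc : ContinuousOn (fun p : Euc din × ℝ => L p.1 p.2) (D ×ˢ (Set.univ : Set ℝ)))
    (errd : ℝ≥0∞)
    (herrd : errd = ⨅ W : Params din d, ∫⁻ x, ENNReal.ofReal (L x (response W x)) ∂μ)
    (hno : ¬ ∃ W : Params din d, ∫⁻ x, ENNReal.ofReal (L x (response W x)) ∂μ = errd)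
    (Wseq : ℕ → Params din d)
    (hseq : Tendsto (fun n => ∫⁻ x, ENNReal.ofReal (L x (response (Wseq n) x)) ∂μ)
      atTop (𝓝 errd)) :
    Tendsto (fun n => ‖Wseq n‖) atTop atTop := by
  rw [hD, mSupport_eq_support] at hLc
  subst herrd
  have hrisk := lowerSemicontinuous_lintegral_ofReal_comp Measure.support_mem_ae hLc
    (continuous_response (din := din) (d := d))
  exact hrisk.tendsto_norm_atTop_of_tendsto_iInf (fun W hW => hno ⟨W, hW⟩) hseq

/-- Divergence of minimizing sequences when no minimizer exists. -/
theorem minimizing_sequence_diverges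
    (din : ℕ) (hdin : 0 < din) (d : ℕ)
    (μ : Measure (Euc din)) [IsFiniteMeasure μ]
    (D : Set (Euc din)) (hD : D = mSupport μ) (hDc : IsCompact D)
    (L : Euc din → ℝ → ℝ)
    (hL0 : ∀ x ∈ D, ∀ y : ℝ, 0 ≤ L x y)
    (hLc : ContinuousOn (fun p : Euc din × ℝ => L p.1 p.2) (D ×ˢ (Set.univ : Set ℝ)))
    (errd : ℝ≥0∞)
    (herrd : errd = ⨅ W : Params din d, ∫⁻ x, ENNReal.ofReal (L x (response W x)) ∂μ)
    (hno : ¬ ∃ W : Params din d, ∫⁻ x, ENNReal.ofReal (L x (response W x)) ∂μ = errd)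
    (Wseq : ℕ → Params din d)
    (hseq : Tendsto (fun n => ∫⁻ x, ENNReal.ofReal (L x (response (Wseq n) x)) ∂μ)
      atTop (𝓝 errd)) :
    Tendsto (fun n => ‖Wseq n‖) atTop atTop :=
  minimizing_sequence_diverges_general din d μ D hD L hLc errd herrd hno Wseq hseq
end
end
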